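/- arXiv:2507.23280 — 5 statements merged into one kernel-verified Lean document; each statement's English description precedes it below -/
import Mathlib

section
/- Let ς be a random vector in ℝⁿ with finite fourth moment, mean μ and covariance Σ, and suppose its fourth moment satisfies the identity E[‖ς‖⁴] = ‖Σ‖_F² + 2(Tr Σ)² + 4 μᵀΣμ + ‖μ‖⁴ (as holds, for instance, for Gaussian ς). Suppose μμᵀ ⪯ Γ_μ and Σ ⪯ Γ_Σ for symmetric positive semidefinite matrices Γ_μ, Γ_Σ ∈ ℝ^{n×n}. Let Z¹, …, Z^N be independent random vectors each with the same law as ς. Then for every ε > 0, P( ‖ (1/N) Σ_{i=1}^N Zⁱ(Zⁱ)ᵀ − E[ςςᵀ] ‖_F < ε ) ≥ 1 − (2/(N ε²)) · ( (Tr Γ_Σ)² + λmax(Γ_Σ) · Tr Γ_μ ). -/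
/-! Each entry of the empirical second-moment matrix is the average of `N` independent copies
of `ς_j ς_k`, so its mean-square deviation from `E[ς_j ς_k]` is `Var(ς_j ς_k) / N`. Summing over
the entries, `E‖·‖_F² = (E‖ς‖⁴ - ‖E[ςςᵀ]‖_F²) / N`; since `E[ςςᵀ] = Σ + μμᵀ`, the fourth-moment
identity turns the numerator into `2 (Tr Σ)² + 2 μᵀΣμ`, and `Σ ⪯ Γ_Σ`, `μμᵀ ⪯ Γ_μ` bound this by
`2 ((Tr Γ_Σ)² + λmax(Γ_Σ) Tr Γ_μ)`. Markov's inequality for `‖·‖_F²` concludes. -/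

open MeasureTheory ProbabilityTheory Matrix

/-- Euclidean norm of a vector in `ℝⁿ`. -/
noncomputable def euclNorm {n : ℕ} (x : Fin n → ℝ) : ℝ := Real.sqrt (∑ i, (x i) ^ 2)

/-- Frobenius norm of a real matrix. -/
noncomputable def frobNorm {n m : ℕ} (A : Matrix (Fin n) (Fin m) ℝ) : ℝ :=
  Real.sqrt (∑ i, ∑ j, (A i j) ^ 2)

/-- Largest eigenvalue of a real symmetric matrix. -/
noncomputable def lamMax {n : ℕ} {A : Matrix (Fin n) (Fin n) ℝ} (hA : A.IsHermitian) : ℝ :=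
  ⨆ i, hA.eigenvalues i

namespace Matrix

lemma trace_le_trace_of_posSemidef_sub {m : Type*} [Fintype m] {A B : Matrix m m ℝ}
    (h : (B - A).PosSemidef) : A.trace ≤ B.trace := by
  simpa [trace_sub, sub_nonneg] using h.trace_nonneg

lemma dotProduct_mulVec_le_of_posSemidef_sub {m : Type*} [Fintype m] {A B : Matrix m m ℝ}
    (h : (B - A).PosSemidef) (x : m → ℝ) : x ⬝ᵥ A *ᵥ x ≤ x ⬝ᵥ B *ᵥ x := by
  simpa [sub_mulVec, sub_nonneg] using h.dotProduct_mulVec_nonneg x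

variable {n : ℕ}

lemma PosSemidef.lamMax_nonneg {A : Matrix (Fin n) (Fin n) ℝ} (hA : A.PosSemidef) :
    0 ≤ lamMax hA.isHermitian := by
  rcases isEmpty_or_nonempty (Fin n) with h | h
  · simp [lamMax, Real.iSup_of_isEmpty]
  · exact le_ciSup_of_le (Set.finite_range _).bddAbove h.some (hA.eigenvalues_nonneg _)

lemma IsHermitian.posSemidef_lamMax_smul_one_sub {A : Matrix (Fin n) (Fin n) ℝ}
    (hA : A.IsHermitian) : (lamMax hA • 1 - A).PosSemidef := by
  rw [posSemidef_iff_isHermitian_and_spectrum_nonneg]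
  refine ⟨(isHermitian_one.smul (IsSelfAdjoint.all _)).sub hA, ?_⟩
  rw [← Algebra.algebraMap_eq_smul_one, ← spectrum.singleton_sub_eq,
    hA.spectrum_real_eq_range_eigenvalues]
  rintro _ ⟨_, rfl, _, ⟨i, rfl⟩, rfl⟩
  exact sub_nonneg.2 (le_ciSup (Set.finite_range hA.eigenvalues).bddAbove i)

lemma IsHermitian.dotProduct_mulVec_le_lamMax_mul {A : Matrix (Fin n) (Fin n) ℝ}
    (hA : A.IsHermitian) (x : Fin n → ℝ) : x ⬝ᵥ A *ᵥ x ≤ lamMax hA * (x ⬝ᵥ x) := by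
  simpa [sub_mulVec, smul_mulVec, sub_nonneg] using
    hA.posSemidef_lamMax_smul_one_sub.dotProduct_mulVec_nonneg x

end Matrix

lemma euclNorm_pow_four {n : ℕ} (x : Fin n → ℝ) :
    euclNorm x ^ 4 = ∑ j, ∑ k, (x j * x k) ^ 2 := by
  rw [show euclNorm x ^ 4 = (euclNorm x ^ 2) ^ 2 by ring, euclNorm, Real.sq_sqrt (by positivity),
    sq, Finset.sum_mul_sum]
  simp only [mul_pow]

lemma frobNorm_sq {n m : ℕ} (A : Matrix (Fin n) (Fin m) ℝ) :
    frobNorm A ^ 2 = ∑ i, ∑ j, A i j ^ 2 :=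
  Real.sq_sqrt (by positivity)

lemma frobNorm_add_vecMulVec_sq {n : ℕ} (S : Matrix (Fin n) (Fin n) ℝ) (μ : Fin n → ℝ) :
    frobNorm (S + vecMulVec μ μ) ^ 2 =
      frobNorm S ^ 2 + 2 * (μ ⬝ᵥ S *ᵥ μ) + euclNorm μ ^ 4 := by
  simp only [frobNorm_sq, euclNorm_pow_four, dotProduct, mulVec, Finset.mul_sum,
    ← Finset.sum_add_distrib, Matrix.add_apply, vecMulVec_apply]
  refine Finset.sum_congr rfl fun j _ => Finset.sum_congr rfl fun k _ => ?_
  ring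

lemma frobNorm_smul_sum_vecMulVec_sub_sq {n : ℕ} {ι : Type*} [Fintype ι] (c : ℝ)
    (z : ι → Fin n → ℝ) (M : Matrix (Fin n) (Fin n) ℝ) :
    frobNorm (c • ∑ i, vecMulVec (z i) (z i) - M) ^ 2 =
      ∑ j, ∑ k, (c * ∑ i, z i j * z i k - M j k) ^ 2 := by
  simp [frobNorm_sq, Matrix.sum_apply, vecMulVec_apply]

section Moments

variable {Ω : Type*} [MeasurableSpace Ω] {P : Measure Ω} [IsProbabilityMeasure P]

lemma one_sub_div_sq_le_measureReal_lt {f : Ω → ℝ} (hf : Integrable (fun ω => f ω ^ 2) P)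
    {C ε : ℝ} (hC : ∫ ω, f ω ^ 2 ∂P ≤ C) (hε : 0 < ε) :
    1 - C / ε ^ 2 ≤ P.real {ω | f ω < ε} := by
  have markov : ε ^ 2 * P.real {ω | ε ^ 2 ≤ f ω ^ 2} ≤ ∫ ω, f ω ^ 2 ∂P :=
    mul_meas_ge_le_integral_of_nonneg (ae_of_all _ fun ω => sq_nonneg _) hf _
  have tail : P.real {ω | ε ≤ f ω} ≤ P.real {ω | ε ^ 2 ≤ f ω ^ 2} :=
    measureReal_mono fun ω (h : ε ≤ f ω) => pow_le_pow_left₀ hε.le h 2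
  have cover : 1 ≤ P.real {ω | f ω < ε} + P.real {ω | ε ≤ f ω} := by
    calc 1 = P.real ({ω | f ω < ε} ∪ {ω | ε ≤ f ω}) := by
          rw [← Set.ofPred_or]; simp [lt_or_ge]
      _ ≤ _ := measureReal_union_le _ _
  have chebyshev : P.real {ω | ε ≤ f ω} ≤ C / ε ^ 2 := by
    rw [le_div_iff₀ (by positivity)]
    nlinarith
  linarith

lemma sum_variance_apply_mul_apply {n : ℕ} {X : Ω → Fin n → ℝ}
    (hX : ∀ j k, MemLp (fun ω => X ω j * X ω k) 2 P) :
    ∑ j, ∑ k, Var[fun ω => X ω j * X ω k; P] =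
      ∫ ω, euclNorm (X ω) ^ 4 ∂P - ∑ j, ∑ k, (∫ ω, X ω j * X ω k ∂P) ^ 2 := by
  have hint : ∀ j k, Integrable (fun ω => (X ω j * X ω k) ^ 2) P :=
    fun j k => (hX j k).integrable_sq
  simp_rw [variance_eq_sub (hX _ _), Finset.sum_sub_distrib, euclNorm_pow_four]
  rw [integral_finsetSum _ fun j _ => integrable_finsetSum _ fun k _ => hint j k]
  simp_rw [integral_finsetSum _ fun k _ => hint _ k]
  rfl

lemma integral_sq_average_sub_eq_variance_div {ι : Type*} [Fintype ι] [Nonempty ι]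
    {Y : ι → Ω → ℝ} {X : Ω → ℝ}
    (hX : MemLp X 2 P) (hYX : ∀ i, IdentDistrib (Y i) X P P)
    (hY : Pairwise fun i j => IndepFun (Y i) (Y j) P) :
    ∫ ω, ((Fintype.card ι : ℝ)⁻¹ * ∑ i, Y i ω - P[X]) ^ 2 ∂P =
      Var[X; P] / Fintype.card ι := by
  have hYL2 : ∀ i, MemLp (Y i) 2 P := fun i => (hYX i).memLp_iff.2 hX
  have hsum : (fun ω => ∑ i, Y i ω) = ∑ i, Y i := by ext; simp
  have hmean : P[fun ω => (Fintype.card ι : ℝ)⁻¹ * ∑ i, Y i ω] = P[X] := by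
    rw [integral_const_mul, integral_finsetSum _ fun i _ => (hYL2 i).integrable one_le_two]
    simp [(hYX _).integral_eq]
  calc ∫ ω, ((Fintype.card ι : ℝ)⁻¹ * ∑ i, Y i ω - P[X]) ^ 2 ∂P
      = Var[fun ω => (Fintype.card ι : ℝ)⁻¹ * ∑ i, Y i ω; P] := by
        rw [variance_eq_integral (((memLp_finsetSum _ fun i _ => hYL2 i).const_mul _).aemeasurable),
          hmean]
    _ = (Fintype.card ι : ℝ)⁻¹ ^ 2 * ∑ i, Var[Y i; P] := by
        rw [variance_const_mul, hsum, IndepFun.variance_sum (fun i _ => hYL2 i)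
          fun i _ j _ hij => hY hij]
    _ = Var[X; P] / Fintype.card ι := by
        simp only [inv_pow, (hYX _).variance_eq, Finset.sum_const, Finset.card_univ, nsmul_eq_mul]
        field_simp

lemma secondMoment_eq_add_vecMulVec {n : ℕ} {X : Ω → Fin n → ℝ}
    (hX : ∀ i, MemLp (fun ω => X ω i) 2 P) {μ : Fin n → ℝ} (hμ : ∀ i, μ i = ∫ ω, X ω i ∂P)
    {S : Matrix (Fin n) (Fin n) ℝ} (hS : ∀ i j, S i j = ∫ ω, (X ω i - μ i) * (X ω j - μ j) ∂P)
    {M : Matrix (Fin n) (Fin n) ℝ} (hM : ∀ i j, M i j = ∫ ω, X ω i * X ω j ∂P) :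
    M = S + vecMulVec μ μ := by
  ext i j
  have hcov := covariance_eq_sub (hX i) (hX j)
  simp only [covariance, Pi.mul_apply, ← hμ, ← hS] at hcov
  rw [hM, Matrix.add_apply, vecMulVec_apply, hcov]
  ring

end Moments

lemma measurable_apply_mul_apply {n : ℕ} (j k : Fin n) :
    Measurable fun x : Fin n → ℝ => x j * x k :=
  (measurable_pi_apply j).mul (measurable_pi_apply k)

section Empirical

variable {Ω : Type*} [MeasurableSpace Ω] {P : Measure Ω} [IsProbabilityMeasure P]
  {n : ℕ} {ι : Type*} [Fintype ι] {X : Ω → Fin n → ℝ} {Z : ι → Ω → Fin n → ℝ}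

lemma memLp_mul_sum_apply_mul_apply_sub
    (hX : ∀ j k, MemLp (fun ω => X ω j * X ω k) 2 P) (hZX : ∀ i, IdentDistrib (Z i) X P P)
    (c m : ℝ) (j k : Fin n) :
    MemLp (fun ω => c * ∑ i, Z i ω j * Z i ω k - m) 2 P := by
  have hZL2 : ∀ i, MemLp (fun ω => Z i ω j * Z i ω k) 2 P := fun i =>
    ((hZX i).comp (measurable_apply_mul_apply j k)).memLp_iff.2 (hX j k)
  exact ((memLp_finsetSum _ fun i _ => hZL2 i).const_mul c).sub (memLp_const _)

lemma integrable_frobNorm_smul_sum_vecMulVec_sub_sq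
    (hX : ∀ j k, MemLp (fun ω => X ω j * X ω k) 2 P) (hZX : ∀ i, IdentDistrib (Z i) X P P)
    (c : ℝ) (M : Matrix (Fin n) (Fin n) ℝ) :
    Integrable (fun ω => frobNorm (c • ∑ i, vecMulVec (Z i ω) (Z i ω) - M) ^ 2) P := by
  simp_rw [frobNorm_smul_sum_vecMulVec_sub_sq]
  exact integrable_finsetSum _ fun j _ => integrable_finsetSum _ fun k _ =>
    (memLp_mul_sum_apply_mul_apply_sub hX hZX c _ j k).integrable_sq

lemma integral_frobNorm_smul_sum_vecMulVec_sub_sq [Nonempty ι]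
    (hX : ∀ j k, MemLp (fun ω => X ω j * X ω k) 2 P) (hZX : ∀ i, IdentDistrib (Z i) X P P)
    (hZ : Pairwise fun i i' => IndepFun (Z i) (Z i') P) {M : Matrix (Fin n) (Fin n) ℝ}
    (hM : ∀ j k, M j k = ∫ ω, X ω j * X ω k ∂P) :
    ∫ ω, frobNorm ((Fintype.card ι : ℝ)⁻¹ • ∑ i, vecMulVec (Z i ω) (Z i ω) - M) ^ 2 ∂P =
      (∑ j, ∑ k, Var[fun ω => X ω j * X ω k; P]) / Fintype.card ι := by
  have hint : ∀ j k, Integrable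
      (fun ω => ((Fintype.card ι : ℝ)⁻¹ * ∑ i, Z i ω j * Z i ω k - M j k) ^ 2) P :=
    fun j k => (memLp_mul_sum_apply_mul_apply_sub hX hZX _ _ j k).integrable_sq
  simp_rw [frobNorm_smul_sum_vecMulVec_sub_sq]
  rw [integral_finsetSum _ fun j _ => integrable_finsetSum _ fun k _ => hint j k]
  simp_rw [integral_finsetSum _ fun k _ => hint _ k, Finset.sum_div, hM]
  refine Finset.sum_congr rfl fun j _ => Finset.sum_congr rfl fun k _ => ?_
  exact integral_sq_average_sub_eq_variance_div (hX j k)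
    (fun i => (hZX i).comp (measurable_apply_mul_apply j k))
    fun i i' h => (hZ h).comp (measurable_apply_mul_apply j k) (measurable_apply_mul_apply j k)

end Empirical

lemma trace_sq_add_dotProduct_mulVec_le {n : ℕ} {S GS Gm : Matrix (Fin n) (Fin n) ℝ}
    {μ : Fin n → ℝ} (hS : 0 ≤ S.trace) (hGS : GS.PosSemidef) (hSGS : (GS - S).PosSemidef)
    (hμGm : (Gm - vecMulVec μ μ).PosSemidef) :
    S.trace ^ 2 + μ ⬝ᵥ S *ᵥ μ ≤ GS.trace ^ 2 + lamMax hGS.isHermitian * Gm.trace := by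
  have htrace : S.trace ^ 2 ≤ GS.trace ^ 2 :=
    pow_le_pow_left₀ hS (trace_le_trace_of_posSemidef_sub hSGS) 2
  have hμμ : μ ⬝ᵥ μ ≤ Gm.trace := by
    simpa [trace_vecMulVec] using trace_le_trace_of_posSemidef_sub hμGm
  have hquad : μ ⬝ᵥ S *ᵥ μ ≤ lamMax hGS.isHermitian * Gm.trace :=
    calc μ ⬝ᵥ S *ᵥ μ ≤ μ ⬝ᵥ GS *ᵥ μ := dotProduct_mulVec_le_of_posSemidef_sub hSGS μ
      _ ≤ lamMax hGS.isHermitian * (μ ⬝ᵥ μ) := hGS.isHermitian.dotProduct_mulVec_le_lamMax_mul μ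
      _ ≤ lamMax hGS.isHermitian * Gm.trace := mul_le_mul_of_nonneg_left hμμ hGS.lamMax_nonneg
  linarith

theorem empirical_second_moment_concentration_general
    {n N : ℕ} (hN : 0 < N)
    {Ω : Type*} [MeasurableSpace Ω] {P : Measure Ω} [IsProbabilityMeasure P]
    -- the random vector ς, with finite fourth moment
    (ς : Ω → Fin n → ℝ) (hςmeas : Measurable ς)
    (hint2 : ∀ i j, Integrable (fun ω => ς ω i * ς ω j) P)
    (hint4 : ∀ i j k l, Integrable (fun ω => ς ω i * ς ω j * (ς ω k * ς ω l)) P)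
    -- mean and covariance
    (μ : Fin n → ℝ) (hμ : ∀ i, μ i = ∫ ω, ς ω i ∂P)
    (Sm : Matrix (Fin n) (Fin n) ℝ)
    (hSm : ∀ i j, Sm i j = ∫ ω, (ς ω i - μ i) * (ς ω j - μ j) ∂P)
    -- second-moment matrix E[ςςᵀ]
    (M : Matrix (Fin n) (Fin n) ℝ)
    (hM : ∀ i j, M i j = ∫ ω, ς ω i * ς ω j ∂P)
    -- the fourth-moment identity
    (h4 : ∫ ω, euclNorm (ς ω) ^ 4 ∂P =
      frobNorm Sm ^ 2 + 2 * Sm.trace ^ 2 + 4 * (μ ⬝ᵥ Sm.mulVec μ) + euclNorm μ ^ 4)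
    -- the bounding matrices
    (Gm GS : Matrix (Fin n) (Fin n) ℝ)
    (hGS : GS.PosSemidef)
    (hμbd : (Gm - vecMulVec μ μ).PosSemidef)
    (hSmbd : (GS - Sm).PosSemidef)
    -- the independent samples, each with the same law as ς
    (Z : Fin N → Ω → Fin n → ℝ) (hZmeas : ∀ i, Measurable (Z i))
    (hZindep : iIndepFun Z P)
    (hZlaw : ∀ i, Measure.map (Z i) P = Measure.map ς P)
    (ε : ℝ) (hε : 0 < ε) :
    1 - 2 / (N * ε ^ 2) * (GS.trace ^ 2 + lamMax hGS.isHermitian * Gm.trace) ≤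
      (P {ω | frobNorm ((N : ℝ)⁻¹ • ∑ i, vecMulVec (Z i ω) (Z i ω) - M) < ε}).toReal := by
  have hςL2 : ∀ i, MemLp (fun ω => ς ω i) 2 P := fun i =>
    (memLp_two_iff_integrable_sq ((measurable_pi_apply i).comp hςmeas).aestronglyMeasurable).2
      (by simpa [sq] using hint2 i i)
  have hςςL2 : ∀ j k, MemLp (fun ω => ς ω j * ς ω k) 2 P := fun j k =>
    (memLp_two_iff_integrable_sq
      ((measurable_apply_mul_apply j k).comp hςmeas).aestronglyMeasurable).2
      (by simpa [sq] using hint4 j k j k)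
  have hMSm : M = Sm + vecMulVec μ μ := secondMoment_eq_add_vecMulVec hςL2 hμ hSm hM
  have hvar : ∑ j, ∑ k, Var[fun ω => ς ω j * ς ω k; P] =
      2 * (Sm.trace ^ 2 + μ ⬝ᵥ Sm *ᵥ μ) := by
    simp_rw [sum_variance_apply_mul_apply hςςL2, ← hM, ← frobNorm_sq, h4, hMSm,
      frobNorm_add_vecMulVec_sq]
    ring
  have htrace : 0 ≤ Sm.trace := Finset.sum_nonneg fun i _ => by
    rw [diag_apply, hSm]
    exact integral_nonneg fun ω => mul_self_nonneg _
  have hZX : ∀ i, IdentDistrib (Z i) ς P P := fun i =>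
    ⟨(hZmeas i).aemeasurable, hςmeas.aemeasurable, hZlaw i⟩
  have : Nonempty (Fin N) := ⟨⟨0, hN⟩⟩
  have hmse := integral_frobNorm_smul_sum_vecMulVec_sub_sq hςςL2 hZX
    (fun i i' h => hZindep.indepFun h) hM
  rw [Fintype.card_fin, hvar] at hmse
  have hbound := trace_sq_add_dotProduct_mulVec_le htrace hGS hSmbd hμbd
  refine le_of_eq_of_le (by ring) (one_sub_div_sq_le_measureReal_lt
    (C := 2 * (GS.trace ^ 2 + lamMax hGS.isHermitian * Gm.trace) / N)
    (integrable_frobNorm_smul_sum_vecMulVec_sub_sq hςςL2 hZX _ M) (hmse.trans_le ?_) hε)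
  gcongr

/-- **(Statement 0)** Chebyshev-type concentration of the empirical second-moment matrix
in the Frobenius norm. -/
theorem empirical_second_moment_concentration
    {n N : ℕ} (hN : 0 < N)
    {Ω : Type*} [MeasurableSpace Ω] {P : Measure Ω} [IsProbabilityMeasure P]
    -- the random vector ς, with finite fourth moment
    (ς : Ω → Fin n → ℝ) (hςmeas : Measurable ς)
    (hint1 : ∀ i, Integrable (fun ω => ς ω i) P)
    (hint2 : ∀ i j, Integrable (fun ω => ς ω i * ς ω j) P)
    (hint4 : ∀ i j k l, Integrable (fun ω => ς ω i * ς ω j * (ς ω k * ς ω l)) P)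
    (hintnorm4 : Integrable (fun ω => euclNorm (ς ω) ^ 4) P)
    -- mean and covariance
    (μ : Fin n → ℝ) (hμ : ∀ i, μ i = ∫ ω, ς ω i ∂P)
    (Sm : Matrix (Fin n) (Fin n) ℝ)
    (hSm : ∀ i j, Sm i j = ∫ ω, (ς ω i - μ i) * (ς ω j - μ j) ∂P)
    -- second-moment matrix E[ςςᵀ]
    (M : Matrix (Fin n) (Fin n) ℝ)
    (hM : ∀ i j, M i j = ∫ ω, ς ω i * ς ω j ∂P)
    -- the fourth-moment identity
    (h4 : ∫ ω, euclNorm (ς ω) ^ 4 ∂P =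
      frobNorm Sm ^ 2 + 2 * Sm.trace ^ 2 + 4 * (μ ⬝ᵥ Sm.mulVec μ) + euclNorm μ ^ 4)
    -- the bounding matrices
    (Gm GS : Matrix (Fin n) (Fin n) ℝ)
    (hGm : Gm.PosSemidef) (hGS : GS.PosSemidef)
    (hμbd : (Gm - vecMulVec μ μ).PosSemidef)
    (hSmbd : (GS - Sm).PosSemidef)
    -- the independent samples, each with the same law as ς
    (Z : Fin N → Ω → Fin n → ℝ) (hZmeas : ∀ i, Measurable (Z i))
    (hZindep : iIndepFun Z P)
    (hZlaw : ∀ i, Measure.map (Z i) P = Measure.map ς P)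
    (ε : ℝ) (hε : 0 < ε) :
    1 - 2 / (N * ε ^ 2) * (GS.trace ^ 2 + lamMax hGS.isHermitian * Gm.trace) ≤
      (P {ω | frobNorm ((N : ℝ)⁻¹ • ∑ i, vecMulVec (Z i ω) (Z i ω) - M) < ε}).toReal :=
  empirical_second_moment_concentration_general hN ς hςmeas hint2 hint4 μ hμ Sm hSm M hM h4 Gm GS
    hGS hμbd hSmbd Z hZmeas hZindep hZlaw ε hε
end

section
/- Let (X_k)_{k∈ℕ} be a nonnegative, integrable stochastic process adapted to a filtration (F_k)_{k∈ℕ} on a probability space (Ω, F, P), and let κ ∈ (0,1), ψ ≥ 0 be constants such that E[X_{k+1} | F_k] ≤ κ X_k + ψ almost surely for every k. Let 0 < η < δ and suppose X₀ ≤ η almost surely, and let T ∈ ℕ. Then P( ∃ k ∈ {0, 1, …, T} : X_k ≥ δ ) ≤ β₁, where β₁ = 1 − (1 − η/δ)(1 − ψ/δ)^T if δ ≥ ψ/(1−κ), and β₁ = (η/δ) κ^T + (ψ/((1−κ)δ)) (1 − κ^T) if δ < ψ/(1−κ). -/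
/-!
Let `A k = staysBelow X δ k` be the event that `X` stays below `δ` up to time `k`, and let
`Y k = levelStopped X δ k` be `X k` on `A k` and `δ` off it. As `A k` is `ℱ k`-measurable, the drift
condition integrates over `A k`, and as `Y (k + 1) ≤ 𝟙_{A k} X (k + 1) + δ 𝟙_{(A k)ᶜ}`, the means
`J k = E[Y k]` satisfy `J (k + 1) ≤ κ E[X k; A k] + ψ P(A k) + δ P((A k)ᶜ)`, while `J 0 ≤ η` and
`δ P((A T)ᶜ) ≤ J T`. Discarding `E[X k; A k] ≥ 0` gives `J (k + 1) - δ ≤ (1 - ψ / δ) (J k - δ)`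
when `ψ ≤ (1 - κ) δ`; discarding `P(A k) ≤ 1` gives
`J (k + 1) - ψ / (1 - κ) ≤ κ (J k - ψ / (1 - κ))` otherwise. Iterate either contraction `T` times.
-/

open MeasureTheory

theorem setIntegral_le_of_condExp_le {α : Type*} {m m₀ : MeasurableSpace α} {μ : Measure α}
    (hm : m ≤ m₀) [SigmaFinite (μ.trim hm)] {f g : α → ℝ} (hf : Integrable f μ)
    (hg : Integrable g μ) (hfg : μ[f|m] ≤ᵐ[μ] g) {s : Set α} (hs : MeasurableSet[m] s) :
    ∫ x in s, f x ∂μ ≤ ∫ x in s, g x ∂μ := by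
  rw [← setIntegral_condExp hm hf hs]
  exact setIntegral_mono_ae integrable_condExp.integrableOn hg.integrableOn hfg

theorem integral_indicator_add_indicator_compl_const {α : Type*} {m : MeasurableSpace α}
    {μ : Measure α} [IsFiniteMeasure μ] {f : α → ℝ} (hf : Integrable f μ) {s : Set α}
    (hs : MeasurableSet s) (c : ℝ) :
    ∫ x, (s.indicator f + sᶜ.indicator fun _ => c) x ∂μ = ∫ x in s, f x ∂μ + c * μ.real sᶜ := by
  rw [integral_add' (hf.indicator hs) ((integrable_const c).indicator hs.compl),
    integral_indicator hs, integral_indicator_const c hs.compl, smul_eq_mul, mul_comm]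

section LevelStopped

variable {Ω : Type*} {X : ℕ → Ω → ℝ} {δ : ℝ}

def staysBelow (X : ℕ → Ω → ℝ) (δ : ℝ) (k : ℕ) : Set Ω := {ω | ∀ j ≤ k, X j ω < δ}

noncomputable def levelStopped (X : ℕ → Ω → ℝ) (δ : ℝ) (k : ℕ) : Ω → ℝ :=
  (staysBelow X δ k).indicator (X k) + (staysBelow X δ k)ᶜ.indicator fun _ => δ

theorem compl_staysBelow (T : ℕ) : (staysBelow X δ T)ᶜ = {ω | ∃ k ≤ T, δ ≤ X k ω} := by
  ext ω
  simp [staysBelow]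

theorem levelStopped_zero_of_lt {ω : Ω} (h : X 0 ω < δ) : levelStopped X δ 0 ω = X 0 ω := by
  have hω : ω ∈ staysBelow X δ 0 := fun j hj => by rwa [Nat.le_zero.mp hj]
  simp [levelStopped, hω]

theorem levelStopped_succ_le (k : ℕ) (ω : Ω) :
    levelStopped X δ (k + 1) ω ≤
      ((staysBelow X δ k).indicator (X (k + 1)) +
        (staysBelow X δ k)ᶜ.indicator fun _ => δ) ω := by
  by_cases hk : ω ∈ staysBelow X δ k
  · by_cases hk' : ω ∈ staysBelow X δ (k + 1)
    · simp [levelStopped, hk, hk']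
    · have hexit : δ ≤ X (k + 1) ω := by
        by_contra! hlt
        exact hk' fun j hj => (Nat.le_succ_iff.mp hj).elim (hk j) (· ▸ hlt)
      simpa [levelStopped, hk, hk'] using hexit
  · have hk' : ω ∉ staysBelow X δ (k + 1) := fun h => hk fun j hj => h j (hj.trans k.le_succ)
    simp [levelStopped, hk, hk']

variable {m0 : MeasurableSpace Ω} {P : Measure Ω} {ℱ : Filtration ℕ m0}

theorem measurableSet_staysBelow (hX : Adapted ℱ X) (k : ℕ) :
    MeasurableSet[ℱ k] (staysBelow X δ k) := by
  have h : staysBelow X δ k = ⋂ j ∈ Set.Iic k, {ω | X j ω < δ} := by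
    ext ω
    simp [staysBelow]
  rw [h]
  exact .biInter (Set.to_countable _) fun j hj =>
    ℱ.mono hj _ (measurableSet_lt (hX j) measurable_const)

section FiniteMeasure

variable [IsFiniteMeasure P]

theorem integral_levelStopped (hX : Adapted ℱ X) {k : ℕ} (hint : Integrable (X k) P) :
    ∫ ω, levelStopped X δ k ω ∂P =
      ∫ ω in staysBelow X δ k, X k ω ∂P + δ * P.real (staysBelow X δ k)ᶜ :=
  integral_indicator_add_indicator_compl_const hint (ℱ.le k _ (measurableSet_staysBelow hX k)) δ

theorem integrable_levelStopped (hX : Adapted ℱ X) {k : ℕ} (hint : Integrable (X k) P) :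
    Integrable (levelStopped X δ k) P :=
  have hA := ℱ.le k _ (measurableSet_staysBelow (δ := δ) hX k)
  (hint.indicator hA).add ((integrable_const δ).indicator hA.compl)

theorem mul_measureReal_compl_staysBelow_le (hX : Adapted ℱ X) {k : ℕ}
    (hint : Integrable (X k) P) (hnonneg : ∀ᵐ ω ∂P, 0 ≤ X k ω) :
    δ * P.real (staysBelow X δ k)ᶜ ≤ ∫ ω, levelStopped X δ k ω ∂P := by
  rw [integral_levelStopped hX hint]
  exact le_add_of_nonneg_left (setIntegral_nonneg_of_ae_restrict (ae_restrict_of_ae hnonneg))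

theorem integral_levelStopped_succ_le (hX : Adapted ℱ X) (hint : ∀ k, Integrable (X k) P)
    {κ ψ : ℝ} {k : ℕ} (hdrift : ∀ᵐ ω ∂P, (P[X (k + 1)|ℱ k]) ω ≤ κ * X k ω + ψ) :
    ∫ ω, levelStopped X δ (k + 1) ω ∂P ≤
      κ * ∫ ω in staysBelow X δ k, X k ω ∂P + ψ * P.real (staysBelow X δ k) +
        δ * P.real (staysBelow X δ k)ᶜ := by
  have hA := measurableSet_staysBelow (δ := δ) hX k
  have hbound := setIntegral_le_of_condExp_le (ℱ.le k) (hint (k + 1))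
    (g := fun ω => κ * X k ω + ψ) (((hint k).const_mul κ).add (integrable_const ψ)) hdrift hA
  rw [integral_add ((hint k).const_mul κ).integrableOn (integrable_const ψ).integrableOn,
    integral_const_mul, setIntegral_const, smul_eq_mul, mul_comm _ ψ] at hbound
  calc ∫ ω, levelStopped X δ (k + 1) ω ∂P
      ≤ ∫ ω, ((staysBelow X δ k).indicator (X (k + 1)) +
          (staysBelow X δ k)ᶜ.indicator fun _ => δ) ω ∂P :=
        integral_mono (integrable_levelStopped hX (hint _))
          (((hint _).indicator (ℱ.le k _ hA)).add
            ((integrable_const δ).indicator (ℱ.le k _ hA).compl))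
          (levelStopped_succ_le k)
    _ = ∫ ω in staysBelow X δ k, X (k + 1) ω ∂P + δ * P.real (staysBelow X δ k)ᶜ :=
        integral_indicator_add_indicator_compl_const (hint _) (ℱ.le k _ hA) δ
    _ ≤ _ := by linarith

end FiniteMeasure

variable [IsProbabilityMeasure P]

theorem integral_levelStopped_zero_le (hX : Adapted ℱ X) (hint : Integrable (X 0) P)
    {η : ℝ} (hηδ : η < δ) (hX0 : ∀ᵐ ω ∂P, X 0 ω ≤ η) :
    ∫ ω, levelStopped X δ 0 ω ∂P ≤ η := by
  have hle : levelStopped X δ 0 ≤ᵐ[P] fun _ => η := hX0.mono fun ω hω => by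
    rw [levelStopped_zero_of_lt (hω.trans_lt hηδ)]
    exact hω
  simpa using integral_mono_ae (integrable_levelStopped hX hint) (integrable_const η) hle

theorem integral_levelStopped_succ_sub_le_of_le (hX : Adapted ℱ X)
    (hint : ∀ k, Integrable (X k) P) {κ ψ : ℝ} {k : ℕ}
    (hdrift : ∀ᵐ ω ∂P, (P[X (k + 1)|ℱ k]) ω ≤ κ * X k ω + ψ)
    (hnonneg : ∀ᵐ ω ∂P, 0 ≤ X k ω) (hδ : 0 < δ) (hψδ : ψ ≤ (1 - κ) * δ) :
    ∫ ω, levelStopped X δ (k + 1) ω ∂P - δ ≤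
      (1 - ψ / δ) * (∫ ω, levelStopped X δ k ω ∂P - δ) := by
  have hstep := integral_levelStopped_succ_le (δ := δ) hX hint hdrift
  rw [integral_levelStopped hX (hint k)]
  rw [probReal_compl_eq_one_sub (ℱ.le k _ (measurableSet_staysBelow hX k))] at hstep ⊢
  set S := ∫ ω in staysBelow X δ k, X k ω ∂P
  set p := P.real (staysBelow X δ k)
  have hS : 0 ≤ S := setIntegral_nonneg_of_ae_restrict (ae_restrict_of_ae hnonneg)
  have hκ : κ ≤ 1 - ψ / δ := by
    rw [le_sub_comm, div_le_iff₀ hδ]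
    linarith
  have hexpand : (1 - ψ / δ) * (S + δ * (1 - p) - δ) = (1 - ψ / δ) * S - (δ - ψ) * p := by
    field_simp
    ring
  rw [hexpand]
  nlinarith [mul_le_mul_of_nonneg_right hκ hS]

theorem integral_levelStopped_succ_sub_le_of_ge (hX : Adapted ℱ X)
    (hint : ∀ k, Integrable (X k) P) {κ ψ : ℝ} {k : ℕ}
    (hdrift : ∀ᵐ ω ∂P, (P[X (k + 1)|ℱ k]) ω ≤ κ * X k ω + ψ) (hκ : κ < 1)
    (hψδ : (1 - κ) * δ ≤ ψ) :
    ∫ ω, levelStopped X δ (k + 1) ω ∂P - ψ / (1 - κ) ≤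
      κ * (∫ ω, levelStopped X δ k ω ∂P - ψ / (1 - κ)) := by
  have hstep := integral_levelStopped_succ_le (δ := δ) hX hint hdrift
  rw [integral_levelStopped hX (hint k)]
  rw [probReal_compl_eq_one_sub (ℱ.le k _ (measurableSet_staysBelow hX k))] at hstep ⊢
  set S := ∫ ω in staysBelow X δ k, X k ω ∂P
  set p := P.real (staysBelow X δ k)
  have hp : p ≤ 1 := measureReal_le_one
  have h1κ : 1 - κ ≠ 0 := (sub_pos.mpr hκ).ne'
  have hexpand :
      κ * (S + δ * (1 - p) - ψ / (1 - κ)) = κ * S + κ * δ * (1 - p) + ψ - ψ / (1 - κ) := by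
    field_simp
    ring
  rw [hexpand]
  nlinarith [mul_le_mul_of_nonneg_right hψδ (sub_nonneg.mpr hp)]

theorem measureReal_compl_staysBelow_le_of_le (hX : Adapted ℱ X)
    (hnonneg : ∀ k, ∀ᵐ ω ∂P, 0 ≤ X k ω) (hint : ∀ k, Integrable (X k) P) {κ ψ : ℝ}
    (hκ : 0 ≤ κ) (hdrift : ∀ k, ∀ᵐ ω ∂P, (P[X (k + 1)|ℱ k]) ω ≤ κ * X k ω + ψ)
    (hδ : 0 < δ) (hψδ : ψ ≤ (1 - κ) * δ) {η : ℝ} (hηδ : η < δ) (hX0 : ∀ᵐ ω ∂P, X 0 ω ≤ η)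
    (T : ℕ) :
    P.real (staysBelow X δ T)ᶜ ≤ 1 - (1 - η / δ) * (1 - ψ / δ) ^ T := by
  set J : ℕ → ℝ := fun k => ∫ ω, levelStopped X δ k ω ∂P
  have hc : 0 ≤ 1 - ψ / δ := by
    rw [sub_nonneg, div_le_one hδ]
    nlinarith
  have hiter : J T - δ ≤ (1 - ψ / δ) ^ T * (J 0 - δ) :=
    le_geom (u := fun k => J k - δ) hc T fun k _ =>
      integral_levelStopped_succ_sub_le_of_le hX hint (hdrift k) (hnonneg k) hδ hψδ
  have hJ0 : J 0 ≤ η := integral_levelStopped_zero_le hX (hint 0) hηδ hX0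
  have hJT := mul_measureReal_compl_staysBelow_le (δ := δ) hX (hint T) (hnonneg T)
  have hexpand : δ * (1 - (1 - η / δ) * (1 - ψ / δ) ^ T) = δ + (1 - ψ / δ) ^ T * (η - δ) := by
    field_simp
    ring
  refine le_of_mul_le_mul_left ?_ hδ
  nlinarith [mul_le_mul_of_nonneg_left hJ0 (pow_nonneg hc T)]

theorem measureReal_compl_staysBelow_le_of_ge (hX : Adapted ℱ X)
    (hnonneg : ∀ k, ∀ᵐ ω ∂P, 0 ≤ X k ω) (hint : ∀ k, Integrable (X k) P) {κ ψ : ℝ}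
    (hκ0 : 0 ≤ κ) (hκ1 : κ < 1) (hdrift : ∀ k, ∀ᵐ ω ∂P, (P[X (k + 1)|ℱ k]) ω ≤ κ * X k ω + ψ)
    (hδ : 0 < δ) (hψδ : (1 - κ) * δ ≤ ψ) {η : ℝ} (hηδ : η < δ) (hX0 : ∀ᵐ ω ∂P, X 0 ω ≤ η)
    (T : ℕ) :
    P.real (staysBelow X δ T)ᶜ ≤ (η / δ) * κ ^ T + (ψ / ((1 - κ) * δ)) * (1 - κ ^ T) := by
  set J : ℕ → ℝ := fun k => ∫ ω, levelStopped X δ k ω ∂P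
  have hiter : J T - ψ / (1 - κ) ≤ κ ^ T * (J 0 - ψ / (1 - κ)) :=
    le_geom (u := fun k => J k - ψ / (1 - κ)) hκ0 T fun k _ =>
      integral_levelStopped_succ_sub_le_of_ge hX hint (hdrift k) hκ1 hψδ
  have hJ0 : J 0 ≤ η := integral_levelStopped_zero_le hX (hint 0) hηδ hX0
  have hJT := mul_measureReal_compl_staysBelow_le (δ := δ) hX (hint T) (hnonneg T)
  have h1κ : 1 - κ ≠ 0 := (sub_pos.mpr hκ1).ne'
  have hexpand : δ * ((η / δ) * κ ^ T + (ψ / ((1 - κ) * δ)) * (1 - κ ^ T)) =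
      ψ / (1 - κ) + κ ^ T * (η - ψ / (1 - κ)) := by
    field_simp
    ring
  refine le_of_mul_le_mul_left ?_ hδ
  nlinarith [mul_le_mul_of_nonneg_left hJ0 (pow_nonneg hκ0 T)]

end LevelStopped

theorem finite_horizon_safety_bound_general
    {Ω : Type*} {m0 : MeasurableSpace Ω} {P : Measure Ω} [IsProbabilityMeasure P]
    (ℱ : Filtration ℕ m0) (X : ℕ → Ω → ℝ)
    (hadapted : Adapted ℱ X)
    (hnonneg : ∀ k, ∀ᵐ ω ∂P, 0 ≤ X k ω)
    (hint : ∀ k, Integrable (X k) P)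
    (κ ψ : ℝ) (hκ0 : 0 < κ) (hκ1 : κ < 1)
    (hdrift : ∀ k, ∀ᵐ ω ∂P, (P[X (k + 1)|ℱ k]) ω ≤ κ * X k ω + ψ)
    (η δ : ℝ) (hη : 0 < η) (hηδ : η < δ)
    (hX0 : ∀ᵐ ω ∂P, X 0 ω ≤ η) (T : ℕ) :
    (P {ω | ∃ k ≤ T, δ ≤ X k ω}).toReal ≤
      if ψ / (1 - κ) ≤ δ then 1 - (1 - η / δ) * (1 - ψ / δ) ^ T
      else (η / δ) * κ ^ T + (ψ / ((1 - κ) * δ)) * (1 - κ ^ T) := by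
  have hδ : 0 < δ := hη.trans hηδ
  have h1κ : 0 < 1 - κ := sub_pos.mpr hκ1
  rw [← compl_staysBelow, ← measureReal_def]
  split_ifs with hcase
  · rw [div_le_iff₀ h1κ, mul_comm] at hcase
    exact measureReal_compl_staysBelow_le_of_le hadapted hnonneg hint hκ0.le hdrift hδ hcase
      hηδ hX0 T
  · rw [not_le, lt_div_iff₀ h1κ, mul_comm] at hcase
    exact measureReal_compl_staysBelow_le_of_ge hadapted hnonneg hint hκ0.le hκ1 hdrift hδ
      hcase.le hηδ hX0 T

/-- **(Statement 7)** Finite-horizon safety bound for a nonnegative process satisfying the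
supermartingale-like drift condition `E[X_{k+1} | F_k] ≤ κ X_k + ψ` with `κ ∈ (0,1)`. -/
theorem finite_horizon_safety_bound
    {Ω : Type*} {m0 : MeasurableSpace Ω} {P : Measure Ω} [IsProbabilityMeasure P]
    (ℱ : Filtration ℕ m0) (X : ℕ → Ω → ℝ)
    (hadapted : Adapted ℱ X)
    (hnonneg : ∀ k, ∀ᵐ ω ∂P, 0 ≤ X k ω)
    (hint : ∀ k, Integrable (X k) P)
    (κ ψ : ℝ) (hκ0 : 0 < κ) (hκ1 : κ < 1) (hψ : 0 ≤ ψ)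
    (hdrift : ∀ k, ∀ᵐ ω ∂P, (P[X (k + 1)|ℱ k]) ω ≤ κ * X k ω + ψ)
    (η δ : ℝ) (hη : 0 < η) (hηδ : η < δ)
    (hX0 : ∀ᵐ ω ∂P, X 0 ω ≤ η) (T : ℕ) :
    (P {ω | ∃ k ≤ T, δ ≤ X k ω}).toReal ≤
      if ψ / (1 - κ) ≤ δ then 1 - (1 - η / δ) * (1 - ψ / δ) ^ T
      else (η / δ) * κ ^ T + (ψ / ((1 - κ) * δ)) * (1 - κ ^ T) :=
  finite_horizon_safety_bound_general ℱ X hadapted hnonneg hint κ ψ hκ0 hκ1 hdrift η δ hη hηδ hX0 T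
end

section
/- Let (X_k)_{k∈ℕ} be a nonnegative, integrable stochastic process adapted to a filtration (F_k)_{k∈ℕ} on a probability space (Ω, F, P), and let ψ ≥ 0 be a constant such that E[X_{k+1} | F_k] ≤ X_k + ψ almost surely for every k. Let 0 < η < δ and suppose X₀ ≤ η almost surely, and let T ∈ ℕ. Then P( ∃ k ∈ {0, 1, …, T} : X_k ≥ δ ) ≤ (η + ψ T)/δ. -/
/-!
Subtracting the linear drift turns `X k` into the supermartingale `X k - ψ k`. Let `τ` be the
first time in `[0, T]` at which `X` reaches `δ` (and `τ = T` if there is none). Optional stopping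
gives `E[X_τ] ≤ E[X 0] + ψ T ≤ η + ψ T`, and `X_τ ≥ δ` on the event that `X` reaches `δ` by time
`T`, so Markov's inequality for the nonnegative variable `X_τ` concludes.
-/

open MeasureTheory
open scoped ProbabilityTheory

namespace MeasureTheory

variable {Ω : Type*} {m0 : MeasurableSpace Ω} {P : Measure Ω} {ℱ : Filtration ℕ m0}

theorem Supermartingale.expected_stoppedValue_le [SigmaFiniteFiltration P ℱ] {g : ℕ → Ω → ℝ}
    (hg : Supermartingale g ℱ P) {τ π : Ω → ℕ∞} (hτ : IsStoppingTime ℱ τ)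
    (hπ : IsStoppingTime ℱ π) (hle : τ ≤ π) {N : ℕ} (hbdd : ∀ ω, π ω ≤ N) :
    P[stoppedValue g π] ≤ P[stoppedValue g τ] := by
  have h := hg.neg.expected_stoppedValue_mono hτ hπ hle hbdd
  simpa only [stoppedValue, Pi.neg_apply, integral_neg, neg_le_neg_iff] using h

theorem setOf_exists_le_ge_subset_stoppedValue_hittingBtwn (X : ℕ → Ω → ℝ) (δ : ℝ) (T : ℕ) :
    {ω | ∃ k ≤ T, δ ≤ X k ω} ⊆
      {ω | δ ≤ stoppedValue X (fun ω => ((hittingBtwn X (Set.Ici δ) 0 T ω : ℕ) : ℕ∞)) ω} :=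
  fun _ ⟨k, hk, hδk⟩ => stoppedValue_hittingBtwn_mem ⟨k, ⟨Nat.zero_le k, hk⟩, hδk⟩

variable {X : ℕ → Ω → ℝ} {ψ : ℝ}

theorem supermartingale_sub_mul_of_condExp_le_add [IsFiniteMeasure P] (hadapted : Adapted ℱ X)
    (hint : ∀ k, Integrable (X k) P)
    (hdrift : ∀ k, ∀ᵐ ω ∂P, (P[X (k + 1)|ℱ k]) ω ≤ X k ω + ψ) :
    Supermartingale (fun k ω => X k ω - ψ * k) ℱ P := by
  refine supermartingale_nat (fun k => ((hadapted k).sub measurable_const).stronglyMeasurable)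
    (fun k => (hint k).sub (integrable_const _)) fun k => ?_
  have hcondExp : P[fun ω => X (k + 1) ω - ψ * ↑(k + 1)|ℱ k]
      =ᵐ[P] P[X (k + 1)|ℱ k] - fun _ => ψ * ↑(k + 1) := by
    rw [← condExp_const (μ := P) (ℱ.le k) (ψ * ↑(k + 1))]
    exact condExp_sub (hint (k + 1)) (integrable_const _) _
  filter_upwards [hcondExp, hdrift k] with ω hω hdrift_ω
  rw [hω, Pi.sub_apply]
  push_cast
  linarith

theorem integral_stoppedValue_le_of_condExp_le_add [IsProbabilityMeasure P]
    (hadapted : Adapted ℱ X) (hint : ∀ k, Integrable (X k) P) (hψ : 0 ≤ ψ)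
    (hdrift : ∀ k, ∀ᵐ ω ∂P, (P[X (k + 1)|ℱ k]) ω ≤ X k ω + ψ)
    {τ : Ω → ℕ∞} (hτ : IsStoppingTime ℱ τ) {N : ℕ} (hbdd : ∀ ω, τ ω ≤ N) :
    P[stoppedValue X τ] ≤ P[X 0] + ψ * N := by
  set g : ℕ → Ω → ℝ := fun k ω => X k ω - ψ * k
  have hg_int : Integrable (stoppedValue g τ) P :=
    integrable_stoppedValue ℕ hτ (fun k => (hint k).sub (integrable_const _)) hbdd
  have hpointwise : ∀ ω, stoppedValue X τ ω ≤ stoppedValue g τ ω + ψ * N := by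
    intro ω
    have : ψ * ((τ ω).untopA : ℝ) ≤ ψ * N := by
      gcongr
      exact WithTop.untopA_le (hbdd ω)
    simp only [g, stoppedValue]
    linarith
  have hstop : P[stoppedValue g τ] ≤ P[g 0] :=
    (supermartingale_sub_mul_of_condExp_le_add hadapted hint hdrift).expected_stoppedValue_le
      (isStoppingTime_const ℱ 0) hτ (fun _ => zero_le) hbdd
  calc P[stoppedValue X τ] ≤ ∫ ω, stoppedValue g τ ω + ψ * N ∂P :=
        integral_mono (integrable_stoppedValue ℕ hτ hint hbdd)
          (hg_int.add (integrable_const _)) hpointwise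
    _ = P[stoppedValue g τ] + ψ * N := by
        rw [integral_add hg_int (integrable_const _), integral_const, probReal_univ, one_smul]
    _ ≤ P[X 0] + ψ * N := by simpa [g] using hstop

end MeasureTheory

/-- **(Statement 8)** Finite-horizon safety bound with relaxation (`κ = 1`): if
`E[X_{k+1} | F_k] ≤ X_k + ψ` then the probability of reaching level `δ` within time `T`
is at most `(η + ψ T)/δ`. -/
theorem finite_horizon_safety_bound_relaxed
    {Ω : Type*} {m0 : MeasurableSpace Ω} {P : Measure Ω} [IsProbabilityMeasure P]
    (ℱ : Filtration ℕ m0) (X : ℕ → Ω → ℝ)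
    (hadapted : Adapted ℱ X)
    (hnonneg : ∀ k, ∀ᵐ ω ∂P, 0 ≤ X k ω)
    (hint : ∀ k, Integrable (X k) P)
    (ψ : ℝ) (hψ : 0 ≤ ψ)
    (hdrift : ∀ k, ∀ᵐ ω ∂P, (P[X (k + 1)|ℱ k]) ω ≤ X k ω + ψ)
    (η δ : ℝ) (hη : 0 < η) (hηδ : η < δ)
    (hX0 : ∀ᵐ ω ∂P, X 0 ω ≤ η) (T : ℕ) :
    (P {ω | ∃ k ≤ T, δ ≤ X k ω}).toReal ≤ (η + ψ * T) / δ := by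
  have hδ : 0 < δ := hη.trans hηδ
  set τ : Ω → ℕ∞ := fun ω => ((hittingBtwn X (Set.Ici δ) 0 T ω : ℕ) : ℕ∞)
  have hτ : IsStoppingTime ℱ τ := hadapted.isStoppingTime_hittingBtwn measurableSet_Ici
  have hτT : ∀ ω, τ ω ≤ T := fun ω => WithTop.coe_le_coe.2 (hittingBtwn_le ω)
  have hXτ_nonneg : 0 ≤ᵐ[P] stoppedValue X τ := by
    filter_upwards [ae_all_iff.2 hnonneg] with ω hω using hω _
  have hX0_integral : P[X 0] ≤ η := by
    simpa using integral_mono_ae (hint 0) (integrable_const η) hX0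
  have hmarkov := mul_meas_ge_le_integral_of_nonneg hXτ_nonneg
    (integrable_stoppedValue ℕ hτ hint hτT) δ
  have hexpect := integral_stoppedValue_le_of_condExp_le_add hadapted hint hψ hdrift hτ hτT
  rw [le_div_iff₀ hδ, mul_comm]
  calc δ * (P {ω | ∃ k ≤ T, δ ≤ X k ω}).toReal
      ≤ δ * P.real {ω | δ ≤ stoppedValue X τ ω} := by
        gcongr
        exact measureReal_mono (setOf_exists_le_ge_subset_stoppedValue_hittingBtwn X δ T)
    _ ≤ η + ψ * T := by linarith
end

section
/- Let P̄ ∈ ℝ^{n×n} be symmetric positive definite, η̄ > 0, and x, z ∈ ℝⁿ be vectors such that x xᵀ ⪯ z zᵀ and η̄ z zᵀ ⪯ P̄. Then xᵀ P̄⁻¹ x ≤ 1/η̄. -/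
open Matrix

/-- **(Statement 16)** If `x xᵀ ⪯ z zᵀ` and `η̄ z zᵀ ⪯ P̄` with `P̄ ≻ 0`, `η̄ > 0`, then
`xᵀ P̄⁻¹ x ≤ 1/η̄`. -/
theorem quadratic_sublevel_of_loewner
    {n : ℕ} (Pb : Matrix (Fin n) (Fin n) ℝ) (hPb : Pb.PosDef)
    (η : ℝ) (hη : 0 < η) (x z : Fin n → ℝ)
    (hxz : (vecMulVec z z - vecMulVec x x).PosSemidef)
    (hzP : (Pb - η • vecMulVec z z).PosSemidef) :
    x ⬝ᵥ Pb⁻¹.mulVec x ≤ 1 / η := by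
  set y := Pb⁻¹.mulVec x with hy
  set t := x ⬝ᵥ y with htdef
  have hyx : y ⬝ᵥ x = t := by rw [dotProduct_comm]
  have hPy : Pb.mulVec y = x := by
    rw [hy, mulVec_mulVec, mul_nonsing_inv _ (isUnit_iff_ne_zero.mpr hPb.det_pos.ne'), one_mulVec]
  have hvm : ∀ (w v u : Fin n → ℝ), u ⬝ᵥ (vecMulVec w v).mulVec u = (u ⬝ᵥ w) * (v ⬝ᵥ u) := by
    intro w v u
    have h : (vecMulVec w v).mulVec u = (v ⬝ᵥ u) • w := by
      ext i
      simp only [vecMulVec_apply, mulVec, dotProduct, Finset.smul_sum, smul_eq_mul, Pi.smul_apply]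
      rw [Finset.sum_mul]
      exact Finset.sum_congr rfl fun j _ => by ring
    rw [h, dotProduct_smul, smul_eq_mul, mul_comm]
  have h1 := hxz.re_dotProduct_nonneg y
  have h2 := hzP.re_dotProduct_nonneg y
  simp only [RCLike.re_to_real, star_trivial, sub_mulVec, dotProduct_sub, smul_mulVec, dotProduct_smul,
    hvm, hPy, hyx, sub_nonneg, smul_eq_mul, dotProduct_comm z y] at h1 h2
  -- h1 : t * t ≤ (y ⬝ᵥ z) * (y ⬝ᵥ z) ; h2 : η * ((y ⬝ᵥ z)*(y ⬝ᵥ z)) ≤ t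
  have ht0 : 0 ≤ t := by
    have := (hPb.inv).posSemidef.re_dotProduct_nonneg x
    simpa using this
  rw [← htdef] at h1
  rw [le_div_iff₀ hη]
  nlinarith [h1, h2, ht0, hη, mul_le_mul_of_nonneg_left h1 hη.le]
end

section
/- Let n, p, T be positive integers, let P̄ ∈ ℝ^{n×n} be symmetric positive definite, ρ > 0, κ ∈ (0,1), Λ ∈ ℝ^{p×n}, let R₁, …, R_T be symmetric matrices in ℝ^{(n+p)×(n+p)}, and α₁, …, α_T ≥ 0. Suppose the symmetric block matrix with row/column block sizes (n, p, n) given by [ [−κ P̄, 0, 0], [0, 0, Λ P̄], [0, P̄ Λᵀ, −(1+ρ)⁻¹ P̄] ] minus Σ_{j=1}^T α_j · [ [R_j, 0], [0, 0] ] (the latter having R_j in its leading (n+p)×(n+p) block and zeros elsewhere) is negative semidefinite. Then every Φ ∈ ℝ^{n×p} satisfying Φ̃ᵀ R_j Φ̃ ⪯ 0 for all j ∈ {1, …, T}, where Φ̃ ∈ ℝ^{(n+p)×n} is the block matrix with top block Iₙ and bottom block Φᵀ, also satisfies (1+ρ) Λᵀ Φᵀ P̄⁻¹ Φ Λ ⪯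 κ P̄⁻¹. -/
/-!
Conjugating the LMI by `diag(Φ̃, Iₙ)` sends each `[[R_j, 0], [0, 0]]` to `diag(Φ̃ᵀ R_j Φ̃, 0) ⪯ 0`,
so (S-procedure) the compressed block `[[-κ P̄, Φ Λ P̄], [P̄ Λᵀ Φᵀ, -(1+ρ)⁻¹ P̄]]` is negative
semidefinite. Its Schur complement with respect to `κ P̄ ≻ 0`, conjugated by `P̄⁻¹`, is
`(1+ρ)⁻¹ P̄⁻¹ - κ⁻¹ Λᵀ Φᵀ P̄⁻¹ Φ Λ ⪰ 0`, a positive multiple of the claim.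
-/

open Matrix

/-- The block matrix `Φ̃ = [Iₙ; Φᵀ]` with top block the identity and bottom block `Φᵀ`. -/
noncomputable def phiTilde {n p : ℕ} (Φ : Matrix (Fin n) (Fin p) ℝ) :
    Matrix (Fin n ⊕ Fin p) (Fin n) ℝ :=
  fromRows (1 : Matrix (Fin n) (Fin n) ℝ) Φᵀ

/-- The symmetric block matrix with row/column block sizes `(n, p, n)` given by
`[[−κ P̄, 0, 0], [0, 0, Λ P̄], [0, P̄ Λᵀ, −(1+ρ)⁻¹ P̄]]`. -/
noncomputable def bigBlock {n p : ℕ} (Pb : Matrix (Fin n) (Fin n) ℝ)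
    (Λ : Matrix (Fin p) (Fin n) ℝ) (ρ κ : ℝ) :
    Matrix ((Fin n ⊕ Fin p) ⊕ Fin n) ((Fin n ⊕ Fin p) ⊕ Fin n) ℝ :=
  fromBlocks (fromBlocks (-(κ • Pb)) 0 0 0)
    (fromRows (0 : Matrix (Fin n) (Fin n) ℝ) (Λ * Pb))
    (fromCols (0 : Matrix (Fin n) (Fin n) ℝ) (Pb * Λᵀ))
    (-((1 + ρ)⁻¹ • Pb))

/-- The matrix `R_j` embedded in the leading `(n+p)×(n+p)` block, with zeros elsewhere. -/
noncomputable def leadingBlock {n p : ℕ} (R : Matrix (Fin n ⊕ Fin p) (Fin n ⊕ Fin p) ℝ) :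
    Matrix ((Fin n ⊕ Fin p) ⊕ Fin n) ((Fin n ⊕ Fin p) ⊕ Fin n) ℝ :=
  fromBlocks R 0 0 0

namespace Matrix

section SProcedure

variable {R : Type*} [CommRing R] [PartialOrder R] [StarRing R] {l m n : Type*} [Fintype m]

theorem PosSemidef.fromBlocks_zero_zero_zero [Fintype n] [DecidableEq m] {S : Matrix m m R}
    (hS : S.PosSemidef) : (fromBlocks S 0 0 (0 : Matrix n n R)).PosSemidef := by
  set J := fromCols (1 : Matrix m m R) (0 : Matrix m n R)
  have hconj : Jᴴ * S * J = fromBlocks S 0 0 0 := by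
    rw [conjTranspose_fromCols_eq_fromRows_conjTranspose]
    ext (i | i) (j | j) <;> simp [J]
  simpa [hconj] using hS.conjTranspose_mul_mul_same J

variable [StarOrderedRing R]

theorem PosSemidef.neg_conjTranspose_mul_mul_of_neg_sub_sum {ι : Type*} [Fintype l]
    {B : Matrix m m R} {L : ι → Matrix m m R} {α : ι → R} {s : Finset ι} (E : Matrix m l R)
    (hB : (-(B - ∑ j ∈ s, α j • L j)).PosSemidef) (hα : ∀ j ∈ s, 0 ≤ α j)
    (hL : ∀ j ∈ s, (-(Eᴴ * L j * E)).PosSemidef) : (-(Eᴴ * B * E)).PosSemidef := by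
  have hsplit : -(Eᴴ * B * E) =
      Eᴴ * (-(B - ∑ j ∈ s, α j • L j)) * E + ∑ j ∈ s, α j • -(Eᴴ * L j * E) := by
    simp only [Matrix.mul_neg, Matrix.neg_mul, Matrix.mul_sub, Matrix.sub_mul, Matrix.mul_sum,
      Matrix.sum_mul, Matrix.mul_smul, Matrix.smul_mul, smul_neg, Finset.sum_neg_distrib]
    abel
  rw [hsplit]
  exact (hB.conjTranspose_mul_mul_same E).add
    (posSemidef_sum s fun j hj => (hL j hj).smul (hα j hj))

end SProcedure

section Schur

variable {m : Type*} [Fintype m] [DecidableEq m]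

theorem PosSemidef.smul_inv_sub_of_neg_fromBlocks {P K : Matrix m m ℝ} (hP : P.PosDef)
    {a b : ℝ} (ha : 0 < a) (hb : 0 < b)
    (h : (-(fromBlocks (-(a • P)) (K * P) (K * P)ᵀ (-(b⁻¹ • P)))).PosSemidef) :
    (a • P⁻¹ - b • (Kᵀ * P⁻¹ * K)).PosSemidef := by
  have hPT : Pᵀ = P := by simpa [conjTranspose_eq_transpose_of_trivial] using hP.1.eq
  have hdet : IsUnit P.det := (isUnit_iff_isUnit_det P).mp hP.isUnit
  have haP : (a • P).PosDef := hP.smul ha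
  let _ := haP.isUnit.invertible
  have hblocks : -(fromBlocks (-(a • P)) (K * P) (K * P)ᵀ (-(b⁻¹ • P))) =
      fromBlocks (a • P) (-(K * P)) (-(K * P))ᴴ (b⁻¹ • P) := by
    simp [fromBlocks_neg, conjTranspose_eq_transpose_of_trivial]
  rw [hblocks, PosDef.fromBlocks₁₁ _ _ haP] at h
  have hinv : (a • P)⁻¹ = a⁻¹ • P⁻¹ :=
    inv_eq_left_inv (by simp [smul_smul, ha.ne', nonsing_inv_mul _ hdet])
  have hcongr : (P⁻¹)ᴴ * (b⁻¹ • P - (-(K * P))ᴴ * (a • P)⁻¹ * -(K * P)) * P⁻¹ =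
      b⁻¹ • P⁻¹ - a⁻¹ • (Kᵀ * P⁻¹ * K) := by
    simp only [hinv, conjTranspose_eq_transpose_of_trivial, transpose_nonsing_inv, hPT,
      transpose_neg, transpose_mul, Matrix.neg_mul, Matrix.mul_neg, neg_neg, Matrix.mul_sub,
      Matrix.sub_mul, Matrix.mul_smul, Matrix.smul_mul, Matrix.mul_assoc, nonsing_inv_mul _ hdet,
      mul_nonsing_inv _ hdet, nonsing_inv_mul_cancel_left _ _ hdet, Matrix.one_mul, smul_neg,
      mul_one]
  have hscale : a • P⁻¹ - b • (Kᵀ * P⁻¹ * K) =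
      (a * b) • (b⁻¹ • P⁻¹ - a⁻¹ • (Kᵀ * P⁻¹ * K)) := by
    rw [smul_sub, smul_smul, smul_smul, mul_inv_cancel_right₀ hb.ne',
      mul_comm a b, mul_inv_cancel_right₀ ha.ne']
  rw [hscale]
  exact (hcongr ▸ h.conjTranspose_mul_mul_same P⁻¹).smul (mul_pos ha hb).le

end Schur

end Matrix

noncomputable def dilatedPhiTilde {n p : ℕ} (Φ : Matrix (Fin n) (Fin p) ℝ) :
    Matrix ((Fin n ⊕ Fin p) ⊕ Fin n) (Fin n ⊕ Fin n) ℝ :=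
  fromBlocks (phiTilde Φ) 0 0 1

theorem dilatedPhiTilde_transpose_mul_bigBlock_mul {n p : ℕ} {Pb : Matrix (Fin n) (Fin n) ℝ}
    (hPb : Pbᵀ = Pb) (Λ : Matrix (Fin p) (Fin n) ℝ) (ρ κ : ℝ) (Φ : Matrix (Fin n) (Fin p) ℝ) :
    (dilatedPhiTilde Φ)ᵀ * bigBlock Pb Λ ρ κ * dilatedPhiTilde Φ =
      fromBlocks (-(κ • Pb)) (Φ * Λ * Pb) (Φ * Λ * Pb)ᵀ (-((1 + ρ)⁻¹ • Pb)) := by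
  rw [dilatedPhiTilde, phiTilde, bigBlock, fromBlocks_transpose, fromBlocks_multiply,
    fromBlocks_multiply]
  simp [transpose_fromRows, fromCols_mul_fromRows, fromCols_mul_fromBlocks, Matrix.mul_assoc, hPb]

theorem dilatedPhiTilde_transpose_mul_leadingBlock_mul {n p : ℕ}
    (R : Matrix (Fin n ⊕ Fin p) (Fin n ⊕ Fin p) ℝ) (Φ : Matrix (Fin n) (Fin p) ℝ) :
    (dilatedPhiTilde Φ)ᵀ * leadingBlock R * dilatedPhiTilde Φ =
      fromBlocks ((phiTilde Φ)ᵀ * R * phiTilde Φ) 0 0 0 := by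
  rw [dilatedPhiTilde, leadingBlock, fromBlocks_transpose, fromBlocks_multiply,
    fromBlocks_multiply]
  simp

theorem data_driven_lmi_implies_decrease_general
    {n p T : ℕ}
    (Pb : Matrix (Fin n) (Fin n) ℝ) (hPb : Pb.PosDef)
    (ρ κ : ℝ) (hρ : 0 < ρ) (hκ0 : 0 < κ)
    (Λ : Matrix (Fin p) (Fin n) ℝ)
    (Rj : Fin T → Matrix (Fin n ⊕ Fin p) (Fin n ⊕ Fin p) ℝ)
    (α : Fin T → ℝ) (hα : ∀ j, 0 ≤ α j)
    (hLMI : (-(bigBlock Pb Λ ρ κ - ∑ j, α j • leadingBlock (Rj j))).PosSemidef) :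
    ∀ Φ : Matrix (Fin n) (Fin p) ℝ,
      (∀ j, (-((phiTilde Φ)ᵀ * Rj j * phiTilde Φ)).PosSemidef) →
      (κ • Pb⁻¹ - (1 + ρ) • (Λᵀ * Φᵀ * Pb⁻¹ * Φ * Λ)).PosSemidef := by
  intro Φ hΦ
  have hPbT : Pbᵀ = Pb := by simpa [conjTranspose_eq_transpose_of_trivial] using hPb.1.eq
  have hconj := hLMI.neg_conjTranspose_mul_mul_of_neg_sub_sum (dilatedPhiTilde Φ)
    (fun j _ => hα j) fun j _ => by
      simpa [conjTranspose_eq_transpose_of_trivial, dilatedPhiTilde_transpose_mul_leadingBlock_mul,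
        fromBlocks_neg] using (hΦ j).fromBlocks_zero_zero_zero (n := Fin n)
  rw [conjTranspose_eq_transpose_of_trivial,
    dilatedPhiTilde_transpose_mul_bigBlock_mul hPbT] at hconj
  simpa [Matrix.mul_assoc] using
    PosSemidef.smul_inv_sub_of_neg_fromBlocks hPb hκ0 (by linarith : (0 : ℝ) < 1 + ρ) hconj

/-- **(Statement 19)** Data-driven LMI implies the S-CBC decrease condition: if the dilated
block matrix minus `Σ_j α_j [[R_j,0],[0,0]]` is negative semidefinite, then every `Φ`
consistent with the data (`Φ̃ᵀ R_j Φ̃ ⪯ 0` for all `j`) satisfies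
`(1+ρ) Λᵀ Φᵀ P̄⁻¹ Φ Λ ⪯ κ P̄⁻¹`. -/
theorem data_driven_lmi_implies_decrease
    {n p T : ℕ} (hn : 0 < n) (hp : 0 < p) (hT : 0 < T)
    (Pb : Matrix (Fin n) (Fin n) ℝ) (hPb : Pb.PosDef)
    (ρ κ : ℝ) (hρ : 0 < ρ) (hκ0 : 0 < κ) (hκ1 : κ < 1)
    (Λ : Matrix (Fin p) (Fin n) ℝ)
    (Rj : Fin T → Matrix (Fin n ⊕ Fin p) (Fin n ⊕ Fin p) ℝ)
    (hRj : ∀ j, (Rj j).IsHermitian)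
    (α : Fin T → ℝ) (hα : ∀ j, 0 ≤ α j)
    (hLMI : (-(bigBlock Pb Λ ρ κ - ∑ j, α j • leadingBlock (Rj j))).PosSemidef) :
    ∀ Φ : Matrix (Fin n) (Fin p) ℝ,
      (∀ j, (-((phiTilde Φ)ᵀ * Rj j * phiTilde Φ)).PosSemidef) →
      (κ • Pb⁻¹ - (1 + ρ) • (Λᵀ * Φᵀ * Pb⁻¹ * Φ * Λ)).PosSemidef :=
  data_driven_lmi_implies_decrease_general Pb hPb ρ κ hρ hκ0 Λ Rj α hα hLMI
end
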